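/- arXiv:1609.07501 — 5 statements merged into one kernel-verified Lean document; each statement's English description precedes it below -/
import Mathlib

section
/- Suppose B > 0, b > 0, v_f ≥ 0, v_l ≥ 0, a_f satisfies −B ≤ a_f ≤ −b, a_l ≥ −B, and x_l − x_f > v_f²/(2b) − v_l²/(2B). Then for every t ≥ 0 such that v_f + a_f·t ≥ 0 and v_l + a_l·t ≥ 0, it holds that (x_l + v_l·t + a_l·t²/2) − (x_f + v_f·t + a_f·t²/2) > (v_f + a_f·t)²/(2b) − (v_l + a_l·t)²/(2B). -/
theorem braking_preserves_controllability (B b v_f v_l a_f a_l x_f x_l : ℝ)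
    (hB : B > 0) (hb : b > 0) (hvf : v_f ≥ 0) (hvl : v_l ≥ 0)
    (haf1 : -B ≤ a_f) (haf2 : a_f ≤ -b) (hal : a_l ≥ -B)
    (h : x_l - x_f > v_f ^ 2 / (2 * b) - v_l ^ 2 / (2 * B)) :
    ∀ t : ℝ, t ≥ 0 → v_f + a_f * t ≥ 0 → v_l + a_l * t ≥ 0 →
      (x_l + v_l * t + a_l * t ^ 2 / 2) - (x_f + v_f * t + a_f * t ^ 2 / 2) >
        (v_f + a_f * t) ^ 2 / (2 * b) - (v_l + a_l * t) ^ 2 / (2 * B) := by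
  intro t ht hf hl
  have hb2 : (0:ℝ) < 2 * b := by linarith
  have hB2 : (0:ℝ) < 2 * B := by linarith
  have h1 : t * (2 * v_f + a_f * t) ≥ 0 := mul_nonneg ht (by linarith)
  have h2 : t * (2 * v_f + a_f * t) * (a_f + b) ≤ 0 :=
    mul_nonpos_of_nonneg_of_nonpos h1 (by linarith)
  have h1' : t * (2 * v_l + a_l * t) ≥ 0 := mul_nonneg ht (by linarith)
  have h2' : t * (2 * v_l + a_l * t) * (a_l + B) ≥ 0 :=
    mul_nonneg h1' (by linarith)
  have key1 : v_f ^ 2 / (2 * b) - (v_f + a_f * t) ^ 2 / (2 * b) ≥ v_f * t + a_f * t ^ 2 / 2 := by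
    rw [ge_iff_le, ← sub_div, le_div_iff₀ hb2]
    nlinarith [h2]
  have key2 : (v_l + a_l * t) ^ 2 / (2 * B) - v_l ^ 2 / (2 * B) ≥ -(v_l * t + a_l * t ^ 2 / 2) := by
    rw [ge_iff_le, ← sub_div, le_div_iff₀ hB2]
    nlinarith [h2']
  linarith [h, key1, key2]
end

section
/- Suppose A > 0, b > 0, B > 0, ε ≥ 0, v_f ≥ 0, v_l ≥ 0, and x_l − x_f > v_f²/(2b) − v_l²/(2B) + (A/b + 1)·(A·ε²/2 + ε·v_f). Then for every t with 0 ≤ t ≤ ε and v_l − B·t ≥ 0 and every a_f with −B ≤ a_f ≤ A, it holds that (x_l + v_l·t − B·t²/2) − (x_f + v_f·t + a_f·t²/2) > (v_f + a_f·t)²/(2b) − (v_l − B·t)²/(2B), provided v_f + a_f·t ≥ 0. -/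
theorem reactivity_constraint (A b B ε v_f v_l x_f x_l : ℝ)
    (hA : A > 0) (hb : b > 0) (hB : B > 0) (hε : ε ≥ 0)
    (hvf : v_f ≥ 0) (hvl : v_l ≥ 0)
    (h : x_l - x_f > v_f ^ 2 / (2 * b) - v_l ^ 2 / (2 * B) +
          (A / b + 1) * (A * ε ^ 2 / 2 + ε * v_f)) :
    ∀ t : ℝ, 0 ≤ t → t ≤ ε → v_l - B * t ≥ 0 →
      ∀ a_f : ℝ, -B ≤ a_f → a_f ≤ A → v_f + a_f * t ≥ 0 →
        (x_l + v_l * t - B * t ^ 2 / 2) - (x_f + v_f * t + a_f * t ^ 2 / 2) >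
          (v_f + a_f * t) ^ 2 / (2 * b) - (v_l - B * t) ^ 2 / (2 * B) := by
  intro t ht0 htε hvlB a_f haB haA hvfa
  have hS0 : 0 ≤ v_f * t + a_f * t ^ 2 / 2 := by
    rcases le_or_gt 0 a_f with hc | hc
    · nlinarith [mul_nonneg hvf ht0, mul_nonneg (mul_nonneg hc ht0) ht0]
    · nlinarith [mul_nonneg hvfa ht0]
  have hSle : v_f * t + a_f * t ^ 2 / 2 ≤ A * ε ^ 2 / 2 + ε * v_f := by
    nlinarith [mul_le_mul_of_nonneg_left htε hvf, sq_nonneg t, sq_nonneg ε,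
      mul_le_mul_of_nonneg_right haA (sq_nonneg t), mul_nonneg ht0 ht0,
      mul_le_mul htε htε ht0 hε]
  have hfac : a_f / b + 1 ≤ A / b + 1 := by
    have := (div_le_div_iff_of_pos_right hb).mpr haA
    linarith
  have hfacpos : (0:ℝ) ≤ A / b + 1 := by positivity
  have key : (a_f / b + 1) * (v_f * t + a_f * t ^ 2 / 2) ≤
      (A / b + 1) * (A * ε ^ 2 / 2 + ε * v_f) :=
    le_trans (mul_le_mul_of_nonneg_right hfac hS0)
      (mul_le_mul_of_nonneg_left hSle hfacpos)
  have e1 : (v_f + a_f * t) ^ 2 / (2 * b) =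
      v_f ^ 2 / (2 * b) + (a_f / b) * (v_f * t + a_f * t ^ 2 / 2) := by
    field_simp
    ring
  have e2 : (v_l - B * t) ^ 2 / (2 * B) = v_l ^ 2 / (2 * B) - v_l * t + B * t ^ 2 / 2 := by
    field_simp
    ring
  rw [e1, e2]
  nlinarith [key]
end

section
/- Let b > 0, B > 0, T ≥ 0, a ∈ ℝ, and define v_gf = v_f0 + a·T, x_gf = x_f0 + v_f0·T + a·T²/2, v_gl = v_l0 − B·T, x_gl = x_l0 + v_l0·T − B·T²/2, and assume v_gl ≥ 0. Then x_gl − x_gf > v_gf²/(2b) − v_gl²/(2B) if and only if x_l0 − x_f0 > v_f0²/(2b) − v_l0²/(2B) + (a/b + 1)·(a·T²/2 + T·v_f0). -/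
theorem ghost_controllability_equiv (b B T a v_f0 x_f0 v_l0 x_l0 : ℝ)
    (hb : b > 0) (hB : B > 0) (hT : T ≥ 0)
    (v_gf : ℝ) (hvgf : v_gf = v_f0 + a * T)
    (x_gf : ℝ) (hxgf : x_gf = x_f0 + v_f0 * T + a * T ^ 2 / 2)
    (v_gl : ℝ) (hvgl : v_gl = v_l0 - B * T)
    (x_gl : ℝ) (hxgl : x_gl = x_l0 + v_l0 * T - B * T ^ 2 / 2)
    (hvgl0 : v_gl ≥ 0) :
    (x_gl - x_gf > v_gf ^ 2 / (2 * b) - v_gl ^ 2 / (2 * B)) ↔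
      (x_l0 - x_f0 > v_f0 ^ 2 / (2 * b) - v_l0 ^ 2 / (2 * B) +
        (a / b + 1) * (a * T ^ 2 / 2 + T * v_f0)) := by
  subst hvgf hxgf hvgl hxgl
  have key : (x_l0 + v_l0 * T - B * T ^ 2 / 2) - (x_f0 + v_f0 * T + a * T ^ 2 / 2)
      - ((v_f0 + a * T) ^ 2 / (2 * b) - (v_l0 - B * T) ^ 2 / (2 * B))
      = x_l0 - x_f0 - (v_f0 ^ 2 / (2 * b) - v_l0 ^ 2 / (2 * B) +
        (a / b + 1) * (a * T ^ 2 / 2 + T * v_f0)) := by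
    field_simp
    ring
  constructor <;> intro h <;> linarith
end

section
/- Suppose A > 0, b > 0, B > 0, ε > 0, τ ≥ 0 with τ ≤ ε, v_f ≥ 0, v_l ≥ 0, v_ld ≥ 0, v_ld − B·τ ≤ v_l. If either (v_ld ≥ B·τ and x_l − x_f > v_f²/(2b) − (v_ld − B·τ)²/(2B) + (A/b + 1)·(A·ε²/2 + ε·v_f)) or (v_ld < B·τ and x_l − x_f > v_f²/(2b) + (A/b + 1)·(A·ε²/2 + ε·v_f)), then x_l − x_f > v_f²/(2b) − v_l²/(2B) + (A/b + 1)·(A·ε²/2 + ε·v_f). -/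
theorem safe_delay_implies_reactivity (A b B ε τ v_f v_l v_ld x_f x_l : ℝ)
    (hA : A > 0) (hb : b > 0) (hB : B > 0) (hε : ε > 0)
    (hτ : τ ≥ 0) (hτε : τ ≤ ε)
    (hvf : v_f ≥ 0) (hvl : v_l ≥ 0) (hvld : v_ld ≥ 0)
    (hdelay : v_ld - B * τ ≤ v_l)
    (h : (v_ld ≥ B * τ ∧ x_l - x_f > v_f ^ 2 / (2 * b) - (v_ld - B * τ) ^ 2 / (2 * B) +
            (A / b + 1) * (A * ε ^ 2 / 2 + ε * v_f)) ∨
         (v_ld < B * τ ∧ x_l - x_f > v_f ^ 2 / (2 * b) +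
            (A / b + 1) * (A * ε ^ 2 / 2 + ε * v_f))) :
    x_l - x_f > v_f ^ 2 / (2 * b) - v_l ^ 2 / (2 * B) +
      (A / b + 1) * (A * ε ^ 2 / 2 + ε * v_f) := by
  rcases h with ⟨hge, hx⟩ | ⟨hlt, hx⟩
  · have hsq : (v_ld - B * τ) ^ 2 ≤ v_l ^ 2 :=
      pow_le_pow_left₀ (by linarith) hdelay 2
    have : (v_ld - B * τ) ^ 2 / (2 * B) ≤ v_l ^ 2 / (2 * B) :=
      div_le_div_of_nonneg_right hsq (by linarith) |>.trans_eq rfl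
    linarith
  · have : 0 ≤ v_l ^ 2 / (2 * B) := by positivity
    linarith
end

section
/- Let B > 0, b > 0, and suppose v_f ≥ 0, v_l ≥ 0, and the follower is stopped with v_f = 0 and a_f = 0 while the lead vehicle has acceleration a_l ≥ −B. If x_l − x_f > 0 and x_l − x_f > v_f²/(2b) − v_l²/(2B) initially, then for every t ≥ 0 with v_l + a_l·t ≥ 0, we have (x_l + v_l·t + a_l·t²/2) − x_f > 0 and (x_l + v_l·t + a_l·t²/2) − x_f > 0²/(2b) − (v_l + a_l·t)²/(2B). -/
theorem stopped_mode_invariance (B b v_f v_l a_f a_l x_f x_l : ℝ)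
    (hB : B > 0) (hb : b > 0) (hvf : v_f ≥ 0) (hvl : v_l ≥ 0)
    (hstop : v_f = 0) (haf : a_f = 0) (hal : a_l ≥ -B)
    (h1 : x_l - x_f > 0)
    (h2 : x_l - x_f > v_f ^ 2 / (2 * b) - v_l ^ 2 / (2 * B)) :
    ∀ t : ℝ, t ≥ 0 → v_l + a_l * t ≥ 0 →
      (x_l + v_l * t + a_l * t ^ 2 / 2) - x_f > 0 ∧
      (x_l + v_l * t + a_l * t ^ 2 / 2) - x_f >
        0 ^ 2 / (2 * b) - (v_l + a_l * t) ^ 2 / (2 * B) := by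
  intro t ht hvt
  have hd : v_l * t + a_l * t ^ 2 / 2 ≥ 0 := by nlinarith [mul_nonneg ht hvt, mul_nonneg ht hvl]
  have hpos : (x_l + v_l * t + a_l * t ^ 2 / 2) - x_f > 0 := by linarith
  refine ⟨hpos, ?_⟩
  have : (v_l + a_l * t) ^ 2 / (2 * B) ≥ 0 := by positivity
  have h0 : (0:ℝ) ^ 2 / (2 * b) = 0 := by norm_num
  rw [h0]
  linarith
end
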